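/- arXiv:1712.10139 — 6 statements merged into one kernel-verified Lean document; each statement's English description precedes it below -/
import Mathlib

section
/- For a positive integer d and a finitely generated abelian group presented by generators x_1,...,x_r, e_1,...,e_h (h > 0), c_1,...,c_h, a_1,b_1,...,a_g,b_g with relations x_1+...+x_r+e_1+...+e_h = 0 in Z_d, the number of group homomorphisms ψ from this group to Z_d such that ψ(x_i) has exact order m_i and ψ(c_j) has exact order 2 equals d^(2g+h-1) · ∏_{i=1}^r φ(m_i) if d is even and each m_i divides d, and equals 0 otherwise. -/
lemma key (d : ℕ) [NeZero d] (n : ℕ) :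
    Fintype.card {x : ZMod d // addOrderOf x = n} = if n ∣ d then n.totient else 0 := by
  classical
  rw [Fintype.card_subtype]
  split_ifs with hdvd
  · have := IsAddCyclic.card_addOrderOf_eq_totient (α := ZMod d)
      (d := n) (by rwa [ZMod.card])
    simpa using this
  · rw [Finset.card_eq_zero]
    ext x
    simp only [Finset.mem_filter, Finset.mem_univ, true_and, Finset.notMem_empty, iff_false]
    intro hx
    have : addOrderOf x ∣ Fintype.card (ZMod d) := addOrderOf_dvd_card
    rw [hx, ZMod.card] at this
    exact hdvd this

/-- Counting order-preserving homomorphisms from the (abelianized) fundamental NEC-group of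
an orientable orbifold with `h > 0` boundary components, `g` handles and branch indices
`m 1, …, m r` to `ZMod d`: such a homomorphism is a tuple
`(u i)ᵢ, (v j)ⱼ, (c j)ⱼ, (a k)ₖ, (b k)ₖ` of elements of `ZMod d` with
`∑ u i + ∑ v j = 0`, each `u i` of exact order `m i` and each `c j` of exact order `2`.
The number of such tuples equals `d ^ (2g + h - 1) * ∏ φ (m i)` if `d` is even and each
`m i` divides `d`, and `0` otherwise. -/
theorem stmt_0 (d : ℕ) (hd : 0 < d) (g h r : ℕ) (hh : 0 < h) (m : Fin r → ℕ) :
    haveI : NeZero d := ⟨hd.ne'⟩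
    Fintype.card
      {t : (Fin r → ZMod d) × (Fin h → ZMod d) × (Fin h → ZMod d) ×
            (Fin g → ZMod d) × (Fin g → ZMod d) //
        (∑ i, t.1 i) + (∑ j, t.2.1 j) = 0 ∧
        (∀ i, addOrderOf (t.1 i) = m i) ∧
        (∀ j, addOrderOf (t.2.2.1 j) = 2)} =
      if Even d ∧ ∀ i, m i ∣ d then
        d ^ (2 * g + h - 1) * ∏ i, Nat.totient (m i)
      else 0 := by
  haveI : NeZero d := ⟨hd.ne'⟩
  classical
  obtain ⟨n, rfl⟩ : ∃ n, h = n + 1 := ⟨h - 1, (Nat.succ_pred_eq_of_pos hh).symm⟩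
  have e : {t : (Fin r → ZMod d) × (Fin (n+1) → ZMod d) × (Fin (n+1) → ZMod d) ×
            (Fin g → ZMod d) × (Fin g → ZMod d) //
        (∑ i, t.1 i) + (∑ j, t.2.1 j) = 0 ∧
        (∀ i, addOrderOf (t.1 i) = m i) ∧
        (∀ j, addOrderOf (t.2.2.1 j) = 2)} ≃
      {u : Fin r → ZMod d // ∀ i, addOrderOf (u i) = m i} × (Fin n → ZMod d) ×
      {c : Fin (n+1) → ZMod d // ∀ j, addOrderOf (c j) = 2} ×
      (Fin g → ZMod d) × (Fin g → ZMod d) :=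
    { toFun := fun t => (⟨t.1.1, t.2.2.1⟩, Fin.tail t.1.2.1, ⟨t.1.2.2.1, t.2.2.2⟩,
        t.1.2.2.2.1, t.1.2.2.2.2)
      invFun := fun p =>
        ⟨(p.1.1, Fin.cons (-(∑ i, p.1.1 i) - ∑ i, p.2.1 i) p.2.1, p.2.2.1.1,
          p.2.2.2.1, p.2.2.2.2),
          by
            refine ⟨?_, p.1.2, p.2.2.1.2⟩
            simp only [Fin.sum_cons]
            ring⟩
      left_inv := fun t => by
        obtain ⟨⟨u, v, c, a, b⟩, hsum, h1, h2⟩ := t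
        have hv : Fin.cons (-(∑ i, u i) - ∑ i, Fin.tail v i) (Fin.tail v) = v := by
          have hs := hsum
          rw [Fin.sum_univ_succ] at hs
          have h0 : (-(∑ i, u i) - ∑ i, Fin.tail v i) = v 0 := by
            have h1 : ∑ i : Fin n, Fin.tail v i = ∑ i : Fin n, v i.succ := rfl
            rw [h1]
            linear_combination -hs
          rw [h0, Fin.cons_self_tail]
        refine Subtype.ext ?_
        dsimp only
        rw [hv]
      right_inv := fun p => by
        obtain ⟨⟨u, hu⟩, w, ⟨c, hc⟩, a, b⟩ := p
        simp [Fin.tail_cons] }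
  rw [Fintype.card_congr e]
  have cardu : Fintype.card {u : Fin r → ZMod d // ∀ i, addOrderOf (u i) = m i} =
      ∏ i, if m i ∣ d then (m i).totient else 0 := by
    rw [Fintype.card_congr (Equiv.subtypePiEquivPi (p := fun i (x : ZMod d) => addOrderOf x = m i)), Fintype.card_pi]
    exact Finset.prod_congr rfl fun i _ => key d (m i)
  have cardc : Fintype.card {c : Fin (n+1) → ZMod d // ∀ j, addOrderOf (c j) = 2} =
      (if (2:ℕ) ∣ d then 1 else 0) ^ (n+1) := by
    rw [Fintype.card_congr (Equiv.subtypePiEquivPi (p := fun (j : Fin (n+1)) (x : ZMod d) => addOrderOf x = 2)), Fintype.card_pi]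
    rw [Finset.prod_congr rfl fun j _ => key d 2]
    simp [Finset.prod_const]
  simp only [Fintype.card_prod, Fintype.card_fun, ZMod.card, Fintype.card_fin,
    cardu, cardc]
  by_cases hcond : Even d ∧ ∀ i, m i ∣ d
  · rw [if_pos hcond]
    obtain ⟨heven, hdvd⟩ := hcond
    rw [if_pos (even_iff_two_dvd.mp heven)]
    have hp : (∏ i, if m i ∣ d then (m i).totient else 0) = ∏ i, (m i).totient :=
      Finset.prod_congr rfl fun i _ => if_pos (hdvd i)
    rw [hp]
    have hexp : 2 * g + (n + 1) - 1 = g + g + n := by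
      clear * -
      omega
    rw [hexp]
    ring
  · rw [if_neg hcond]
    push_neg at hcond
    by_cases heven : Even d
    · obtain ⟨i, hi⟩ := hcond heven
      have hz : (if m i ∣ d then (m i).totient else 0) = 0 := if_neg hi
      rw [Finset.prod_eq_zero (Finset.mem_univ i) hz]
      simp
    · rw [if_neg (fun hdv => heven (even_iff_two_dvd.mpr hdv))]
      simp
end

section
/- Let l be a positive even integer, g, h, r nonnegative integers with h ≥ 1, and m_1,...,m_r integers greater than 1. Define H(d) = d^{2g+h-1}·∏φ(m_i) if d is even and each m_i divides d, and H(d) = 0 otherwise. Then ∑_{d | l} μ(l/d)·H(d) = (m')^{2g+h-1} · J_{2g+h-1}(l/m') · ∏_{i=1}^r φ(m_i) if m' divides l, and 0 otherwise, where m' = lcm(2, m_1, ..., m_r) and J_k is the Jordan totient function J_k(n) = n^k ∏_{p|n}(1 - p^{-k}). -/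
open ArithmeticFunction

/-- The Jordan totient function, as the Möbius inverse of `n ↦ n ^ k`:
`J_k(n) = ∑_{d ∣ n} μ(n/d) d^k`. -/
def jordanTotient (k n : ℕ) : ℤ :=
  ∑ d ∈ n.divisors, moebius (n / d) * (d : ℤ) ^ k

/-- Let `l` be a positive even integer, `h ≥ 1`, and `m i > 1`.  With
`H(d) = d^(2g+h-1) ∏ φ(m i)` if `d` is even and every `m i ∣ d`, and `H(d) = 0`
otherwise, we have `∑_{d ∣ l} μ(l/d) H(d) = (m')^(2g+h-1) J_(2g+h-1)(l/m') ∏ φ(m i)`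
if `m' = lcm(2, m 1, …, m r)` divides `l`, and `0` otherwise. -/
theorem stmt_4 (l : ℕ) (hl : 0 < l) (hleven : Even l) (g h r : ℕ) (hh : 1 ≤ h)
    (m : Fin r → ℕ) (hm : ∀ i, 1 < m i) :
    (∑ d ∈ l.divisors, moebius (l / d) *
        (if Even d ∧ ∀ i, m i ∣ d then
            (d : ℤ) ^ (2 * g + h - 1) * ∏ i, (Nat.totient (m i) : ℤ)
          else 0)) =
      if Nat.lcm 2 (Finset.univ.lcm m) ∣ l then
        (Nat.lcm 2 (Finset.univ.lcm m) : ℤ) ^ (2 * g + h - 1) *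
          jordanTotient (2 * g + h - 1) (l / Nat.lcm 2 (Finset.univ.lcm m)) *
          ∏ i, (Nat.totient (m i) : ℤ)
      else 0 := by
  set M := Nat.lcm 2 (Finset.univ.lcm m) with hM
  set k := 2 * g + h - 1 with hk
  set P := ∏ i, (Nat.totient (m i) : ℤ) with hP
  have hMpos : 0 < M := by
    rw [hM]
    refine Nat.pos_of_ne_zero ?_
    refine Nat.lcm_ne_zero (by norm_num) ?_
    intro h0
    rcases (Finset.lcm_eq_zero_iff.mp h0) with ⟨i, _, hi⟩
    have := hm i
    omega
  have hcond : ∀ d : ℕ, (Even d ∧ ∀ i, m i ∣ d) ↔ M ∣ d := by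
    intro d
    rw [hM, Nat.lcm_dvd_iff, even_iff_two_dvd]
    constructor
    · rintro ⟨h2, hall⟩
      exact ⟨h2, Finset.lcm_dvd fun i _ => hall i⟩
    · rintro ⟨h2, hlcm⟩
      exact ⟨h2, fun i => dvd_trans (Finset.dvd_lcm (Finset.mem_univ i)) hlcm⟩
  have hLHS : (∑ d ∈ l.divisors, moebius (l / d) *
        (if Even d ∧ ∀ i, m i ∣ d then (d : ℤ) ^ k * P else 0)) =
      ∑ d ∈ l.divisors.filter (M ∣ ·), moebius (l / d) * ((d : ℤ) ^ k * P) := by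
    rw [Finset.sum_filter]
    refine Finset.sum_congr rfl fun d _ => ?_
    by_cases hc : M ∣ d
    · rw [if_pos ((hcond d).mpr hc), if_pos hc]
    · rw [if_neg (fun hx => hc ((hcond d).mp hx)), if_neg hc, mul_zero]
  rw [hLHS]
  by_cases hdl : M ∣ l
  · rw [if_pos hdl]
    set n := l / M with hn
    have hln : l = M * n := (Nat.mul_div_cancel' hdl).symm
    have hnpos : 0 < n := Nat.div_pos (Nat.le_of_dvd hl hdl) hMpos
    have hln : l = M * n := (Nat.mul_div_cancel' hdl).symm
    rw [jordanTotient, Finset.mul_sum, Finset.sum_mul]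
    refine Finset.sum_nbij' (fun d => d / M) (fun e => M * e) ?_ ?_ ?_ ?_ ?_
    · intro d hd
      simp only [Finset.mem_filter, Nat.mem_divisors] at hd
      obtain ⟨⟨hdvd, _⟩, e, rfl⟩ := hd
      beta_reduce
      rw [Nat.mul_div_cancel_left _ hMpos, Nat.mem_divisors]
      refine ⟨?_, hnpos.ne'⟩
      rw [hln] at hdvd
      exact (mul_dvd_mul_iff_left hMpos.ne').mp hdvd
    · intro e he
      rw [Nat.mem_divisors] at he
      simp only [Finset.mem_filter, Nat.mem_divisors]
      exact ⟨⟨hln ▸ mul_dvd_mul_left M he.1, hl.ne'⟩, dvd_mul_right M e⟩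
    · intro d hd
      simp only [Finset.mem_filter] at hd
      exact Nat.mul_div_cancel' hd.2
    · intro e _
      exact Nat.mul_div_cancel_left _ hMpos
    · intro d hd
      simp only [Finset.mem_filter, Nat.mem_divisors] at hd
      obtain ⟨⟨_, _⟩, e, rfl⟩ := hd
      beta_reduce
      rw [Nat.mul_div_cancel_left _ hMpos, hln, Nat.mul_div_mul_left _ _ hMpos]
      push_cast
      ring
  · rw [if_neg hdl]
    rw [Finset.filter_false_of_mem, Finset.sum_empty]
    intro d hd hMd
    exact hdl (dvd_trans hMd (Nat.dvd_of_mem_divisors hd))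
end

section
/- Let G be a group given by generators x_1,...,x_r and a_1,...,a_g with relations x_1···x_r·a_1^2···a_g^2 = 1 and x_i^{m_i} = 1. For an odd positive integer d, the number of homomorphisms ψ: G → Z_d with each ψ(x_i) of exact order m_i equals d^{g-1}·∏_{i=1}^r φ(m_i) if every m_i divides d, and 0 otherwise. -/
/-- The relations `x 1 ⋯ x r * a 1 ^ 2 ⋯ a g ^ 2 = 1` and `x i ^ (m i) = 1` defining
the fundamental group of a closed non-orientable orbifold with `g` crosscaps and
branch indices `m 1, …, m r`. -/
def orbifoldRels (r g : ℕ) (m : Fin r → ℕ) : Set (FreeGroup (Fin r ⊕ Fin g)) :=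
  insert
    ((List.ofFn fun i : Fin r => FreeGroup.of (Sum.inl i)).prod *
      (List.ofFn fun k : Fin g => (FreeGroup.of (Sum.inr k)) ^ 2).prod)
    {w | ∃ i : Fin r, w = FreeGroup.of (Sum.inl i) ^ m i}

/-!
A homomorphism to an abelian group `M` is a choice of images `u i` of the `x i` and `w k` of
the `a k` with `∏ u i * ∏ w k ^ 2 = 1`. When `|M|` is odd, squaring is a bijection of `M`, so
for every admissible `u` the last `w` is determined by the others, and the count factors as
`|M| ^ (g - 1)` times the number of `u` with `orderOf (u i) = m i`. In the cyclic group
`ZMod d` there are `φ (m i)` elements of order `m i` if `m i ∣ d`, and none otherwise.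
-/

namespace PresentedGroup

variable {α G : Type*} [Group G]

def homEquiv (rels : Set (FreeGroup α)) :
    (PresentedGroup rels →* G) ≃ {f : α → G // ∀ w ∈ rels, FreeGroup.lift f w = 1} where
  toFun ψ := ⟨fun x => ψ (of x), fun w hw => by
    have hlift : FreeGroup.lift (fun x => ψ (of x)) = ψ.comp (mk rels) := by
      ext; simp [of]
    rw [hlift, MonoidHom.comp_apply, one_of_mem hw, map_one]⟩
  invFun f := toGroup f.2
  left_inv ψ := ext fun _ => toGroup.of _
  right_inv f := Subtype.ext <| funext fun _ => toGroup.of _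

end PresentedGroup

def Equiv.subtypeProdAndEquiv {α β γ : Type*} {A : α → Prop} {B : α → β → Prop}
    (F : ∀ a, {b // B a b} ≃ γ) : {p : α × β // A p.1 ∧ B p.1 p.2} ≃ {a // A a} × γ where
  toFun p := (⟨p.1.1, p.2.1⟩, F p.1.1 ⟨p.1.2, p.2.2⟩)
  invFun q := ⟨(q.1.1, (F q.1.1).symm q.2), q.1.2, ((F q.1.1).symm q.2).2⟩
  left_inv p := by simp
  right_inv q := by simp

/-- The last coordinate is the square root of `(c * ∏ k < n, w k ^ 2)⁻¹`. -/
noncomputable def mulProdSqEqOneEquiv {M : Type*} [CommGroup M] (h : (Nat.card M).Coprime 2)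
    (c : M) (n : ℕ) : {w : Fin (n + 1) → M // c * ∏ k, w k ^ 2 = 1} ≃ (Fin n → M) where
  toFun w := Fin.init w.1
  invFun v := ⟨Fin.snoc v ((powCoprime h).symm (c * ∏ k, v k ^ 2)⁻¹), by
    rw [Fin.prod_univ_castSucc, ← mul_assoc]
    simp only [Fin.snoc_castSucc, Fin.snoc_last]
    rw [← powCoprime_apply h, Equiv.apply_symm_apply, mul_inv_cancel]⟩
  left_inv w := by
    have hw : (c * ∏ k, Fin.init w.1 k ^ 2) * w.1 (Fin.last n) ^ 2 = 1 := by
      have := w.2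
      rwa [Fin.prod_univ_castSucc, ← mul_assoc] at this
    have hlast : (powCoprime h).symm (c * ∏ k, Fin.init w.1 k ^ 2)⁻¹ = w.1 (Fin.last n) :=
      (powCoprime h).symm_apply_eq.mpr (inv_eq_of_mul_eq_one_right hw)
    exact Subtype.ext <| by simp only [hlast, Fin.snoc_init_self]
  right_inv v := Fin.init_snoc (α := fun _ => M) _ v

theorem lift_orbifoldProductRelator {G : Type*} [CommGroup G] {r g : ℕ}
    (f : Fin r ⊕ Fin g → G) :
    FreeGroup.lift f ((List.ofFn fun i : Fin r => FreeGroup.of (Sum.inl i)).prod *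
      (List.ofFn fun k : Fin g => (FreeGroup.of (Sum.inr k)) ^ 2).prod) =
      (∏ i, f (.inl i)) * ∏ k, f (.inr k) ^ 2 := by
  simp only [map_mul, map_list_prod, List.map_ofFn, Function.comp_def, map_pow,
    FreeGroup.lift_apply_of, List.prod_ofFn]

theorem forall_lift_orbifoldRels_eq_one_iff {G : Type*} [CommGroup G] {r g : ℕ} {m : Fin r → ℕ}
    (f : Fin r ⊕ Fin g → G) :
    (∀ w ∈ orbifoldRels r g m, FreeGroup.lift f w = 1) ↔
      (∏ i, f (.inl i)) * (∏ k, f (.inr k) ^ 2) = 1 ∧ ∀ i, f (.inl i) ^ m i = 1 := by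
  simp [orbifoldRels, lift_orbifoldProductRelator]

theorem IsCyclic.card_orderOf_eq_ite {G : Type*} [Group G] [Finite G] [IsCyclic G] (n : ℕ) :
    Nat.card {x : G // orderOf x = n} = if n ∣ Nat.card G then n.totient else 0 := by
  have := Fintype.ofFinite G
  split_ifs with hn
  · rw [Nat.card_eq_fintype_card, Fintype.card_subtype, IsCyclic.card_orderOf_eq_totient]
    rwa [← Nat.card_eq_fintype_card]
  · have : IsEmpty {x : G // orderOf x = n} :=
      ⟨fun x => hn (x.2 ▸ orderOf_dvd_natCard x.1)⟩
    exact Nat.card_of_isEmpty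

theorem card_orbifoldHom_orderOf_eq {M : Type*} [CommGroup M] [Finite M]
    (h : (Nat.card M).Coprime 2) (r n : ℕ) (m : Fin r → ℕ) :
    Nat.card {ψ : PresentedGroup (orbifoldRels r (n + 1) m) →* M //
        ∀ i, orderOf (ψ (PresentedGroup.of (.inl i))) = m i} =
      (∏ i, Nat.card {x : M // orderOf x = m i}) * Nat.card M ^ n := by
  have hrels (f : Fin r ⊕ Fin (n + 1) → M) :
      ((∀ w ∈ orbifoldRels r (n + 1) m, FreeGroup.lift f w = 1) ∧
        ∀ i, orderOf (f (.inl i)) = m i) ↔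
      (∀ i, orderOf (f (.inl i)) = m i) ∧ (∏ i, f (.inl i)) * ∏ k, f (.inr k) ^ 2 = 1 := by
    rw [forall_lift_orbifoldRels_eq_one_iff]
    constructor
    · rintro ⟨⟨hprod, -⟩, hord⟩
      exact ⟨hord, hprod⟩
    · rintro ⟨hord, hprod⟩
      exact ⟨⟨hprod, fun i => hord i ▸ pow_orderOf_eq_one _⟩, hord⟩
  calc _ = Nat.card {f : Fin r ⊕ Fin (n + 1) → M //
          (∀ w ∈ orbifoldRels r (n + 1) m, FreeGroup.lift f w = 1) ∧
            ∀ i, orderOf (f (.inl i)) = m i} :=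
        Nat.card_congr <| ((PresentedGroup.homEquiv _).subtypeEquiv fun _ => Iff.rfl).trans
          (Equiv.subtypeSubtypeEquivSubtypeInter _ _)
    _ = Nat.card {p : (Fin r → M) × (Fin (n + 1) → M) //
          (∀ i, orderOf (p.1 i) = m i) ∧ (∏ i, p.1 i) * ∏ k, p.2 k ^ 2 = 1} :=
        Nat.card_congr <| (Equiv.sumArrowEquivProdArrow _ _ _).subtypeEquiv hrels
    _ = Nat.card ({u : Fin r → M // ∀ i, orderOf (u i) = m i} × (Fin n → M)) :=
        Nat.card_congr <| Equiv.subtypeProdAndEquiv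
          (A := fun u : Fin r → M => ∀ i, orderOf (u i) = m i)
          fun u => mulProdSqEqOneEquiv h (∏ i, u i) n
    _ = _ := by
      rw [Nat.card_prod, Nat.card_congr (Equiv.subtypePiEquivPi (p := fun i x => orderOf x = m i)),
        Nat.card_pi, Nat.card_fun, Nat.card_fin]

theorem stmt_7_general (d : ℕ) (hodd : Odd d) (g r : ℕ) (hg : 1 ≤ g)
    (m : Fin r → ℕ) :
    Nat.card
      {ψ : PresentedGroup (orbifoldRels r g m) →* Multiplicative (ZMod d) //
        ∀ i : Fin r, orderOf (ψ (PresentedGroup.of (Sum.inl i))) = m i} =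
      if ∀ i, m i ∣ d then d ^ (g - 1) * ∏ i, Nat.totient (m i) else 0 := by
  obtain ⟨n, rfl⟩ : ∃ n, g = n + 1 := ⟨g - 1, by omega⟩
  have : NeZero d := ⟨hodd.pos.ne'⟩
  have hcard : Nat.card (Multiplicative (ZMod d)) = d := by simp
  rw [card_orbifoldHom_orderOf_eq (by rwa [hcard, Nat.coprime_two_right]), hcard]
  simp only [IsCyclic.card_orderOf_eq_ite, hcard, Fintype.prod_ite_zero, Nat.add_sub_cancel,
    mul_comm, mul_ite, mul_zero]

/-- Let `G` be the group generated by `x 1, …, x r, a 1, …, a g` with relations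
`x 1 ⋯ x r a 1² ⋯ a g² = 1` and `x i ^ (m i) = 1`.  For an odd positive integer `d`, the
number of homomorphisms `ψ : G → ZMod d` with each `ψ (x i)` of exact order `m i` equals
`d ^ (g - 1) * ∏ φ (m i)` if every `m i` divides `d`, and `0` otherwise. -/
theorem stmt_7 (d : ℕ) (hd : 0 < d) (hodd : Odd d) (g r : ℕ) (hg : 1 ≤ g)
    (m : Fin r → ℕ) (hm : ∀ i, 1 < m i) :
    Nat.card
      {ψ : PresentedGroup (orbifoldRels r g m) →* Multiplicative (ZMod d) //
        ∀ i : Fin r, orderOf (ψ (PresentedGroup.of (Sum.inl i))) = m i} =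
      if ∀ i, m i ∣ d then d ^ (g - 1) * ∏ i, Nat.totient (m i) else 0 :=
  stmt_7_general d hodd g r hg m
end

section
/- Let l be an even positive integer, g ≥ 1, and m_1,...,m_r integers > 1. Define H(d) for divisors d of l by: H(d) = d^{g-1}∏φ(m_i) if d is odd and all m_i | d; H(d) = 2d^{g-1}∏φ(m_i) if d is even, all m_i | d, and ∑ d/m_i is even; H(d)=0 otherwise. Let b be the denominator of ∑_i 1/(2m_i) in lowest terms and set m' = lcm(2, b, m_1, ..., m_r). If l = 2^q·k with k odd and q ≥ 2, then ∑_{d|l} μ(l/d)H(d) = 2(m')^{g-1}·J_{g-1}(l/m')·∏φ(m_i) when m' divides l, and ∑_{d|l} μ(l/d)H(d) = 0 when m' does not divide l. -/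
open ArithmeticFunction

/-- The number `H(d)` of order-preserving homomorphisms from the fundamental group of a
closed non-orientable orbifold with `g` crosscaps and branch indices `m i` to `ZMod d`:
`H(d) = d^(g-1) ∏ φ(m i)` if `d` is odd and all `m i ∣ d`;
`H(d) = 2 d^(g-1) ∏ φ(m i)` if `d` is even, all `m i ∣ d` and `∑ d / m i` is even;
`H(d) = 0` otherwise. -/
def H (g r : ℕ) (m : Fin r → ℕ) (d : ℕ) : ℤ :=
  if Odd d ∧ ∀ i, m i ∣ d then (d : ℤ) ^ (g - 1) * ∏ i, (Nat.totient (m i) : ℤ)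
  else if Even d ∧ (∀ i, m i ∣ d) ∧ Even (∑ i, d / m i) then
    2 * (d : ℤ) ^ (g - 1) * ∏ i, (Nat.totient (m i) : ℤ)
  else 0

/-- `(n * q).den = 1` iff `q.den ∣ n`. -/
lemma aux_mul_den_eq_one_iff (q : ℚ) (n : ℕ) : ((n : ℚ) * q).den = 1 ↔ q.den ∣ n := by
  have h0 : (q.den : ℤ) ≠ 0 := by exact_mod_cast q.den_nz
  have key : (n : ℚ) * q = (((n : ℤ) * q.num : ℤ) : ℚ) / ((q.den : ℤ) : ℚ) := by
    push_cast
    rw [mul_div_assoc, Rat.num_div_den]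
  rw [key, Rat.den_div_intCast_eq_one_iff _ _ h0]
  constructor
  · intro h
    have h2 : q.den ∣ n * q.num.natAbs := by
      have := Int.natAbs_dvd_natAbs.mpr h
      simpa [Int.natAbs_mul] using this
    exact (q.reduced.symm).dvd_of_dvd_mul_right h2
  · intro h
    exact dvd_mul_of_dvd_left (Int.natCast_dvd_natCast.mpr h) _

/-- The parity criterion: for `d` divisible by all `m i`, `∑ d / m i` is even iff the
denominator of `∑ 1/(2 m i)` divides `d`. -/
lemma aux_even_sum_div_iff {r : ℕ} (m : Fin r → ℕ) (d : ℕ) (hd : ∀ i, m i ∣ d) :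
    Even (∑ i, d / m i) ↔ (∑ i, (1 : ℚ) / (2 * (m i : ℚ))).den ∣ d := by
  set s : ℚ := ∑ i, (1 : ℚ) / (2 * (m i : ℚ)) with hs
  have hds : ((∑ i, d / m i : ℕ) : ℚ) / 2 = (d : ℚ) * s := by
    rw [hs, Finset.mul_sum, Nat.cast_sum, Finset.sum_div]
    refine Finset.sum_congr rfl fun i _ => ?_
    rw [Rat.natCast_div _ _ (hd i), div_div, mul_comm ((m i : ℚ)) 2, mul_one_div]
  rw [even_iff_two_dvd, ← Rat.den_div_natCast_eq_one_iff (∑ i, d / m i) 2 two_ne_zero,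
    show ((2 : ℕ) : ℚ) = 2 from by norm_num, hds, aux_mul_den_eq_one_iff]

/-- Alternative form of the Jordan totient. -/
lemma aux_jordanTotient_eq (k n : ℕ) :
    jordanTotient k n = ∑ d ∈ n.divisors, (moebius d : ℤ) * ((n / d : ℕ) : ℤ) ^ k := by
  rcases eq_or_ne n 0 with rfl | hn
  · simp [jordanTotient]
  · rw [jordanTotient, ← Nat.sum_div_divisors n fun d => (moebius d : ℤ) * ((n / d : ℕ) : ℤ) ^ k]
    refine Finset.sum_congr rfl fun d hd => ?_
    rw [Nat.div_div_self (Nat.mem_divisors.mp hd).1 hn]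

/-- For `l = 2^q k` with `k` odd and `q ≥ 2`, `g ≥ 1` and branch indices `m i > 1`, the
Möbius sum `∑_{d ∣ l} μ(l/d) H(d)` equals `2 (m')^(g-1) J_(g-1)(l/m') ∏ φ(m i)` when
`m' = lcm(2, b, m 1, …, m r)` divides `l` (`b` being the denominator of `∑ 1/(2 m i)` in
lowest terms), and `0` otherwise. -/
theorem stmt_9 (l q k : ℕ) (hq : 2 ≤ q) (hk : Odd k) (hlqk : l = 2 ^ q * k)
    (g r : ℕ) (hg : 1 ≤ g) (m : Fin r → ℕ) (hm : ∀ i, 1 < m i) :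
    (∑ d ∈ l.divisors, moebius (l / d) * H g r m d) =
      if Nat.lcm 2 (Nat.lcm (∑ i, (1 : ℚ) / (2 * (m i : ℚ))).den (Finset.univ.lcm m)) ∣ l
      then
        2 * (Nat.lcm 2
              (Nat.lcm (∑ i, (1 : ℚ) / (2 * (m i : ℚ))).den (Finset.univ.lcm m)) : ℤ) ^
            (g - 1) *
          jordanTotient (g - 1)
            (l / Nat.lcm 2
              (Nat.lcm (∑ i, (1 : ℚ) / (2 * (m i : ℚ))).den (Finset.univ.lcm m))) *
          ∏ i, (Nat.totient (m i) : ℤ)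
      else 0 := by
  classical
  set b : ℕ := (∑ i, (1 : ℚ) / (2 * (m i : ℚ))).den with hb
  set M : ℕ := Finset.univ.lcm m with hM
  set m' : ℕ := Nat.lcm 2 (Nat.lcm b M) with hm'
  set P : ℤ := ∏ i, (Nat.totient (m i) : ℤ) with hP
  have hk0 : k ≠ 0 := by rintro rfl; simp [Nat.odd_iff] at hk
  have hl0 : l ≠ 0 := by
    rw [hlqk]; exact Nat.mul_ne_zero (pow_ne_zero _ two_ne_zero) hk0
  -- Step A: rewrite each term of the sum.
  have hstep : ∀ d ∈ l.divisors,
      (moebius (l / d) : ℤ) * H g r m d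
        = if m' ∣ d then (moebius (l / d) : ℤ) * (2 * (d : ℤ) ^ (g - 1) * P) else 0 := by
    intro d hd
    have hd1 : d ∣ l := (Nat.mem_divisors.mp hd).1
    rcases Nat.even_or_odd d with hde | hdo
    · -- d even
      have h1 : ¬(Odd d ∧ ∀ i, m i ∣ d) := fun h => (Nat.not_even_iff_odd.mpr h.1) hde
      have hcond : (Even d ∧ (∀ i, m i ∣ d) ∧ Even (∑ i, d / m i)) ↔ m' ∣ d := by
        rw [hm', Nat.lcm_dvd_iff, Nat.lcm_dvd_iff, hM, Finset.lcm_dvd_iff]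
        constructor
        · rintro ⟨h2, hdvd, hev⟩
          exact ⟨even_iff_two_dvd.mp h2, (aux_even_sum_div_iff m d hdvd).mp hev,
            fun i _ => hdvd i⟩
        · rintro ⟨h2, hbd, hMd⟩
          have hdvd : ∀ i, m i ∣ d := fun i => hMd i (Finset.mem_univ i)
          exact ⟨even_iff_two_dvd.mpr h2, hdvd, (aux_even_sum_div_iff m d hdvd).mpr hbd⟩
      rw [H, if_neg h1]
      by_cases hc : m' ∣ d
      · rw [if_pos (hcond.mpr hc), if_pos hc, hP]
      · rw [if_neg (fun h => hc (hcond.mp h)), if_neg hc, mul_zero]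
    · -- d odd: μ(l/d) = 0 since 4 ∣ l/d, and m' ∤ d.
      have hdk : d ∣ k := by
        have hco : Nat.Coprime d (2 ^ q) :=
          ((Nat.prime_two.coprime_iff_not_dvd.mpr
            (by rw [← even_iff_two_dvd]; exact Nat.not_even_iff_odd.mpr hdo)).symm).pow_right q
        refine hco.dvd_of_dvd_mul_left ?_
        have := hd1
        rw [hlqk] at this
        exact this
      have hmu : (moebius (l / d) : ℤ) = 0 := by
        norm_cast
        apply moebius_eq_zero_of_not_squarefree
        intro hsq
        have h4 : 2 * 2 ∣ l / d := by
          rw [hlqk, Nat.mul_div_assoc _ hdk]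
          exact Dvd.dvd.mul_right (by
            calc (2 * 2 : ℕ) = 2 ^ 2 := by norm_num
            _ ∣ 2 ^ q := pow_dvd_pow 2 hq) _
        exact absurd (Nat.isUnit_iff.mp (hsq 2 h4)) (by norm_num)
      have hnd : ¬ m' ∣ d := by
        intro h
        have h2d : 2 ∣ d := dvd_trans (Nat.dvd_lcm_left _ _) (hm' ▸ h)
        exact (Nat.not_even_iff_odd.mpr hdo) (even_iff_two_dvd.mpr h2d)
      rw [hmu, zero_mul, if_neg hnd]
  rw [Finset.sum_congr rfl hstep]
  by_cases hdl : m' ∣ l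
  · rw [if_pos hdl]
    have hF := (Nat.sum_div_divisors l fun d =>
      if m' ∣ d then (moebius (l / d) : ℤ) * (2 * (d : ℤ) ^ (g - 1) * P) else 0).symm
    rw [hF]
    have hstep2 : ∀ d ∈ l.divisors,
        (if m' ∣ l / d then (moebius (l / (l / d)) : ℤ)
            * (2 * ((l / d : ℕ) : ℤ) ^ (g - 1) * P) else 0)
          = if d ∣ l / m' then (moebius d : ℤ)
              * (2 * ((l / d : ℕ) : ℤ) ^ (g - 1) * P) else 0 := by
      intro d hd
      have hd1 : d ∣ l := (Nat.mem_divisors.mp hd).1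
      have hiff : m' ∣ l / d ↔ d ∣ l / m' := by
        rw [Nat.dvd_div_iff_mul_dvd hd1, Nat.dvd_div_iff_mul_dvd hdl, mul_comm]
      rw [Nat.div_div_self hd1 hl0]
      simp only [hiff]
    rw [Finset.sum_congr rfl hstep2, ← Finset.sum_filter,
      Nat.divisors_filter_dvd_of_dvd hl0 (Nat.div_dvd_of_dvd hdl)]
    have hstep3 : ∀ d ∈ (l / m').divisors,
        (moebius d : ℤ) * (2 * ((l / d : ℕ) : ℤ) ^ (g - 1) * P)
          = 2 * (m' : ℤ) ^ (g - 1) * P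
              * ((moebius d : ℤ) * (((l / m') / d : ℕ) : ℤ) ^ (g - 1)) := by
      intro d hd
      have hd2 : d ∣ l / m' := (Nat.mem_divisors.mp hd).1
      have hld : l / d = m' * ((l / m') / d) := by
        rw [← Nat.mul_div_assoc _ hd2, Nat.mul_div_cancel' hdl]
      rw [hld]
      push_cast
      ring
    rw [Finset.sum_congr rfl hstep3, ← Finset.mul_sum, aux_jordanTotient_eq]
    ring
  · rw [if_neg hdl]
    refine Finset.sum_eq_zero fun d hd => ?_
    exact if_neg fun h => hdl (h.trans (Nat.mem_divisors.mp hd).1)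
end

section
/- If α ∈ {1,2}, g', h, r are nonnegative integers, m_1,...,m_r are integers ≥ 2, and E := α·g' − 2 + h + ∑_{i=1}^r (1 − 1/m_i) is strictly positive, then E ≥ 1/42. -/
private lemma inv_nat_le (n k : ℕ) (hk : 0 < k) (h : k ≤ n) : (1:ℚ)/n ≤ 1/k := by
  apply one_div_le_one_div_of_le
  · exact_mod_cast hk
  · exact_mod_cast h

private lemma inv_nat_lt_imp (n k : ℕ) (hn : 0 < n) (h : (1:ℚ)/n < 1/(k:ℚ)) :
    k + 1 ≤ n := by
  by_contra hc
  push_neg at hc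
  have hnk : n ≤ k := by omega
  have := inv_nat_le k n hn hnk
  linarith

private lemma inv_step (n k : ℕ) (hn : 0 < n) (h : (1:ℚ)/n < 1/(k:ℚ)) :
    (1:ℚ)/n ≤ 1/((k:ℚ)+1) := by
  have h1 := inv_nat_lt_imp n k hn h
  have := inv_nat_le n (k+1) (by omega) h1
  push_cast at this
  linarith

private lemma cls2 (x : ℕ) (hx : 2 ≤ x) : (1:ℚ)/x = 1/2 ∨ (1:ℚ)/x ≤ 1/3 := by
  rcases Nat.lt_or_ge x 3 with h | h
  · left
    have : x = 2 := by omega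
    subst this; norm_num
  · right; exact inv_nat_le x 3 (by norm_num) h

private lemma cls4 (x : ℕ) (hx : 2 ≤ x) :
    (1:ℚ)/x = 1/2 ∨ (1:ℚ)/x = 1/3 ∨ (1:ℚ)/x = 1/4 ∨ (1:ℚ)/x ≤ 1/5 := by
  rcases Nat.lt_or_ge x 5 with h | h
  · interval_cases x
    · left; norm_num
    · right; left; norm_num
    · right; right; left; norm_num
  · right; right; right; exact inv_nat_le x 5 (by norm_num) h

private lemma duo (a b : ℕ) (ha : 2 ≤ a) (hb : 2 ≤ b)
    (h : (1:ℚ)/a + 1/b < 1) : (1:ℚ)/a + 1/b ≤ 5/6 := by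
  have hpa : (0:ℚ) < 1/(a:ℚ) := by
    have : (0:ℚ) < (a:ℚ) := by exact_mod_cast (by omega : 0 < a)
    positivity
  have hpb : (0:ℚ) < 1/(b:ℚ) := by
    have : (0:ℚ) < (b:ℚ) := by exact_mod_cast (by omega : 0 < b)
    positivity
  rcases cls2 a ha with h1 | h1 <;> rcases cls2 b hb with h2 | h2 <;> linarith

set_option maxHeartbeats 1000000 in
private lemma tri (a b c : ℕ) (ha : 2 ≤ a) (hb : 2 ≤ b) (hc : 2 ≤ c)
    (h : (1:ℚ)/a + 1/b + 1/c < 1) : (1:ℚ)/a + 1/b + 1/c ≤ 41/42 := by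
  have hpa : (0:ℚ) < 1/(a:ℚ) := by
    have : (0:ℚ) < (a:ℚ) := by exact_mod_cast (by omega : 0 < a)
    positivity
  have hpb : (0:ℚ) < 1/(b:ℚ) := by
    have : (0:ℚ) < (b:ℚ) := by exact_mod_cast (by omega : 0 < b)
    positivity
  have hpc : (0:ℚ) < 1/(c:ℚ) := by
    have : (0:ℚ) < (c:ℚ) := by exact_mod_cast (by omega : 0 < c)
    positivity
  rcases cls4 a ha with h1 | h1 | h1 | h1 <;>
    rcases cls4 b hb with h2 | h2 | h2 | h2 <;>
    rcases cls4 c hc with h3 | h3 | h3 | h3 <;>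
    first
    | linarith
    | (have hlt : (1:ℚ)/c < 1/((6:ℕ):ℚ) := by push_cast; linarith
       have h7 := inv_step c 6 (by omega) hlt
       push_cast at h7; linarith)
    | (have hlt : (1:ℚ)/b < 1/((6:ℕ):ℚ) := by push_cast; linarith
       have h7 := inv_step b 6 (by omega) hlt
       push_cast at h7; linarith)
    | (have hlt : (1:ℚ)/a < 1/((6:ℕ):ℚ) := by push_cast; linarith
       have h7 := inv_step a 6 (by omega) hlt
       push_cast at h7; linarith)

private lemma tet (a b c d : ℕ) (ha : 2 ≤ a) (hb : 2 ≤ b) (hc : 2 ≤ c) (hd : 2 ≤ d)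
    (h : (1:ℚ)/a + 1/b + 1/c + 1/d < 2) : (1:ℚ)/a + 1/b + 1/c + 1/d ≤ 11/6 := by
  rcases cls2 a ha with h1 | h1 <;> rcases cls2 b hb with h2 | h2 <;>
    rcases cls2 c hc with h3 | h3 <;> rcases cls2 d hd with h4 | h4 <;> linarith

private lemma main_aux (n r : ℕ) (m : Fin r → ℕ) (hm : ∀ i, 2 ≤ m i)
    (hE : (0:ℚ) < (n:ℚ) - 2 + ∑ i, (1 - 1/(m i : ℚ))) :
    (1:ℚ)/42 ≤ (n:ℚ) - 2 + ∑ i, (1 - 1/(m i : ℚ)) := by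
  set T := ∑ i, (1 - 1/(m i : ℚ)) with hT
  have hub : ∀ i, (1:ℚ) - 1/(m i) ≤ 1 := by
    intro i
    have : (0:ℚ) ≤ 1/(m i : ℚ) := by positivity
    linarith
  have hlb : ∀ i, (1:ℚ)/2 ≤ 1 - 1/(m i) := by
    intro i
    have := inv_nat_le (m i) 2 (by norm_num) (hm i)
    linarith
  have hTub : T ≤ (r:ℚ) := by
    calc T ≤ ∑ _i : Fin r, (1:ℚ) := Finset.sum_le_sum (fun i _ => hub i)
    _ = r := by simp
  have hTlb : (r:ℚ)/2 ≤ T := by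
    calc (r:ℚ)/2 = ∑ _i : Fin r, (1:ℚ)/2 := by simp; ring
    _ ≤ T := Finset.sum_le_sum (fun i _ => hlb i)
  have hrnn : (0:ℚ) ≤ (r:ℚ) := Nat.cast_nonneg r
  rcases Nat.lt_or_ge n 3 with h3 | h3
  · interval_cases n
    · -- n = 0 : T > 2
      push_cast at hE ⊢
      have hr3 : 3 ≤ r := by
        have : (2:ℚ) < (r:ℚ) := by linarith
        exact_mod_cast this
      rcases Nat.lt_or_ge r 5 with h5 | h5
      · have hr34 : r = 3 ∨ r = 4 := by omega
        rcases hr34 with hr | hr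
        · subst hr
          have e := Fin.sum_univ_three (fun i => (1:ℚ) - 1/(m i))
          simp only [hT] at *
          rw [e] at hE ⊢
          have := tri (m 0) (m 1) (m 2) (hm 0) (hm 1) (hm 2) (by linarith)
          linarith
        · subst hr
          have e := Fin.sum_univ_four (fun i => (1:ℚ) - 1/(m i))
          simp only [hT] at *
          rw [e] at hE ⊢
          have := tet (m 0) (m 1) (m 2) (m 3) (hm 0) (hm 1) (hm 2) (hm 3)
            (by linarith)
          linarith
      · have : (5:ℚ) ≤ (r:ℚ) := by exact_mod_cast h5
        linarith
    · -- n = 1 : T > 1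
      push_cast at hE ⊢
      have hr2 : 2 ≤ r := by
        have : (1:ℚ) < (r:ℚ) := by linarith
        exact_mod_cast this
      rcases Nat.lt_or_ge r 3 with h3' | h3'
      · have hr : r = 2 := by omega
        subst hr
        have e := Fin.sum_univ_two (fun i => (1:ℚ) - 1/(m i))
        simp only [hT] at *
        rw [e] at hE ⊢
        have := duo (m 0) (m 1) (hm 0) (hm 1) (by linarith)
        linarith
      · have : (3:ℚ) ≤ (r:ℚ) := by exact_mod_cast h3'
        linarith
    · -- n = 2 : T > 0
      push_cast at hE ⊢
      have hr1 : 1 ≤ r := by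
        by_contra hc
        have hr0 : r = 0 := by omega
        subst hr0
        have hT0 : T = 0 := by simp [hT]
        linarith
      have : (1:ℚ) ≤ (r:ℚ) := by exact_mod_cast hr1
      linarith
  · have : (3:ℚ) ≤ (n:ℚ) := by exact_mod_cast h3
    linarith

/-- If `α ∈ {1, 2}`, `g', h, r` are nonnegative integers, `m 1, …, m r` are integers
`≥ 2`, and `E = α g' − 2 + h + ∑ (1 − 1/m i)` is strictly positive, then `E ≥ 1/42`. -/
theorem stmt_11 (α g' h r : ℕ) (hα : α = 1 ∨ α = 2) (m : Fin r → ℕ)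
    (hm : ∀ i, 2 ≤ m i)
    (hE : (0 : ℚ) < (α : ℚ) * g' - 2 + h + ∑ i, (1 - 1 / (m i : ℚ))) :
    (1 : ℚ) / 42 ≤ (α : ℚ) * g' - 2 + h + ∑ i, (1 - 1 / (m i : ℚ)) := by
  have key := main_aux (α * g' + h) r m hm ?_
  · push_cast at key; linarith
  · push_cast; linarith
end

section
/- Let l be an odd positive integer, h ≥ 1, g ≥ 0, r ≥ 0, m_1,...,m_r > 1 with m := lcm(m_1,...,m_r). Define H⁺(2d) for divisors d of l as the number of homomorphisms into Z_{2d} from the free-abelian-with-torsion-conditions data: tuples (u_i)_{i≤r}, (v_j)_{j≤h}, (c_j)_{j≤h}, (w_k)_{k≤2g} in Z_{2d} with ∑u_i + ∑v_j = 0, each u_i of exact order m_i, each c_j of exact order 2 and odd (i.e., c_j generates the odd coset), and all u_i, v_j, w_k even. Then H⁺(2d) = d^{2g+h-1}·∏φ(m_i) if d is odd and all m_i | d, and 0 otherwise; and consequently ∑_{d | l, l/d odd} μ(l/d)·H⁺(2d) = m^{2g+h-1}·J_{2g+h-1}(l/m)·∏_{i=1}^r φ(m_i) when m | l (and 0 when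 m ∤ l). -/
open ArithmeticFunction

/-- `Hplus r h g m D` is the number of tuples `(u, v, c, w)` of elements of `ZMod D`
(`u : Fin r`, `v c : Fin h`, `w : Fin (2g)`) with `∑ u i + ∑ v j = 0`, each `u i` of
exact order `m i`, each `c j` of exact order `2` and odd, and all `u i`, `v j`, `w k`
even.  This is the number of orientation-and-order-preserving homomorphisms from the
fundamental NEC-group of an orientable orbifold with `h` boundary components, `g` handles
and branch indices `m i` to `ZMod D`. -/
noncomputable def Hplus (r h g : ℕ) (m : Fin r → ℕ) (D : ℕ) : ℕ :=
  Nat.card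
    {t : (Fin r → ZMod D) × (Fin h → ZMod D) × (Fin h → ZMod D) ×
          (Fin (2 * g) → ZMod D) //
      (∑ i, t.1 i) + (∑ j, t.2.1 j) = 0 ∧
      (∀ i, addOrderOf (t.1 i) = m i) ∧
      (∀ j, addOrderOf (t.2.2.1 j) = 2 ∧ ¬ Even (t.2.2.1 j).val) ∧
      (∀ i, Even (t.1 i).val) ∧ (∀ j, Even (t.2.1 j).val) ∧
      (∀ k, Even (t.2.2.2 k).val)}

/-! The even residues of `ZMod (2 * d)` are the image of the doubling embedding
`ZMod d → ZMod (2 * d)`, and the only element of order `2` is `d`, which is odd exactly when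
`d` is. So a tuple counted by `Hplus r h g m (2 * d)` consists of
elements of `ZMod d` of orders `m i` (`φ (m i)` choices each, if `m i ∣ d`), `h` elements `v j`
of which the first is fixed by the relation, the forced `c j = d`, and `2g` free `w k`. In the
Möbius sum every divisor of the odd `l` is odd, only multiples `d = M e` of `M` contribute, and
`∑_{e ∣ l/M} μ(l/(M e)) (M e)^k = M^k J_k(l/M)`. -/

namespace ZMod

def twoMulHom (d : ℕ) : ZMod d →+ ZMod (2 * d) :=
  lift d ⟨zmultiplesHom _ 2, by
    simpa [mul_comm] using natCast_self (2 * d)⟩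

variable {d : ℕ} [NeZero d]

lemma twoMulHom_apply (y : ZMod d) : twoMulHom d y = ((2 * y.val : ℕ) : ZMod (2 * d)) := by
  conv_lhs => rw [← natCast_zmod_val y, ← Int.cast_natCast]
  rw [twoMulHom, lift_coe]
  simp [mul_comm]

lemma val_twoMulHom (y : ZMod d) : (twoMulHom d y).val = 2 * y.val := by
  rw [twoMulHom_apply, val_natCast_of_lt (by linarith [val_lt y])]

lemma twoMulHom_injective : Function.Injective (twoMulHom d) := fun y y' h => by
  have := congrArg val h
  rw [val_twoMulHom, val_twoMulHom] at this
  exact val_injective _ (by omega)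

lemma even_val_twoMulHom (y : ZMod d) : Even (twoMulHom d y).val := by
  rw [val_twoMulHom]
  exact even_two_mul _

lemma addOrderOf_twoMulHom (y : ZMod d) : addOrderOf (twoMulHom d y) = addOrderOf y :=
  addOrderOf_injective _ twoMulHom_injective y

def half (x : ZMod (2 * d)) : ZMod d := (x.val / 2 : ℕ)

lemma half_twoMulHom (y : ZMod d) : half (twoMulHom d y) = y := by
  simp [half, val_twoMulHom]

lemma twoMulHom_half {x : ZMod (2 * d)} (hx : Even x.val) : twoMulHom d (half x) = x := by
  apply val_injective
  rw [val_twoMulHom, half, val_natCast_of_lt (by have := val_lt x; omega)]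
  exact Nat.mul_div_cancel' (even_iff_two_dvd.mp hx)

lemma addOrderOf_eq_two_iff (x : ZMod (2 * d)) : addOrderOf x = 2 ↔ x.val = d := by
  have h2x : 2 • x = ((2 * x.val : ℕ) : ZMod (2 * d)) := by simp [nsmul_eq_mul]
  rw [addOrderOf_eq_prime_iff, h2x, natCast_eq_zero_iff, Nat.mul_dvd_mul_iff_left two_pos,
    ← val_ne_zero]
  constructor
  · rintro ⟨hdvd, h0⟩
    exact Nat.eq_of_dvd_of_lt_two_mul h0 hdvd (val_lt x)
  · intro h
    rw [h]
    exact ⟨dvd_rfl, NeZero.ne d⟩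

lemma card_odd_addOrderOf_eq_two :
    Nat.card {x : ZMod (2 * d) // addOrderOf x = 2 ∧ ¬ Even x.val} = if Odd d then 1 else 0 := by
  simp only [addOrderOf_eq_two_iff]
  split_ifs with hd
  · have hval : (d : ZMod (2 * d)).val = d := val_natCast_of_lt (by linarith [NeZero.pos d])
    refine Nat.card_eq_one_iff_exists.mpr
      ⟨⟨d, hval, by rwa [hval, Nat.not_even_iff_odd]⟩, fun y => Subtype.ext ?_⟩
    exact val_injective _ (y.2.1.trans hval.symm)
  · have : IsEmpty {x : ZMod (2 * d) // x.val = d ∧ ¬ Even x.val} :=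
      ⟨fun ⟨x, hx, hodd⟩ => hd (by rwa [hx, Nat.not_even_iff_odd] at hodd)⟩
    exact Nat.card_of_isEmpty

lemma card_addOrderOf_eq (k : ℕ) :
    Nat.card {x : ZMod d // addOrderOf x = k} = if k ∣ d then Nat.totient k else 0 := by
  rw [Nat.card_eq_fintype_card, Fintype.card_subtype]
  split_ifs with hk
  · exact IsAddCyclic.card_addOrderOf_eq_totient (by rwa [card])
  · exact Finset.card_eq_zero.mpr <| Finset.filter_eq_empty_iff.mpr fun x _ hx =>
      hk (hx ▸ addOrderOf_dvd_card.trans (card d).dvd)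

end ZMod

lemma card_sum_add_sum_eq_zero {G ι : Type*} [AddCommGroup G] [Fintype ι]
    (P : (ι → G) → Prop) (n : ℕ) :
    Nat.card {p : (ι → G) × (Fin (n + 1) → G) // ∑ i, p.1 i + ∑ j, p.2 j = 0 ∧ P p.1} =
      Nat.card {u // P u} * Nat.card G ^ n := by
  rw [show Nat.card G ^ n = Nat.card (Fin n → G) by simp [Nat.card_fun], ← Nat.card_prod]
  refine Nat.card_congr
    { toFun := fun p => (⟨p.1.1, p.2.2⟩, Fin.tail p.1.2)
      invFun := fun q => ⟨(q.1, Fin.cons (-∑ i, q.1.1 i - ∑ j, q.2 j) q.2), ?_, q.1.2⟩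
      left_inv := fun ⟨⟨u, v⟩, hsum, hP⟩ => ?_
      right_inv := fun q => rfl }
  · simp [Fin.sum_univ_succ]
  · have : -∑ i, u i - ∑ j, Fin.tail v j = v 0 := by
      rw [Fin.sum_univ_succ] at hsum
      simp only [Fin.tail]
      linear_combination (norm := module) -hsum
    simp only [this, Fin.cons_self_tail]

open ZMod in
lemma Hplus_two_mul_eq_card_mul {r h g : ℕ} {m : Fin r → ℕ} {d : ℕ} [NeZero d] :
    Hplus r h g m (2 * d) =
      Nat.card {p : (Fin r → ZMod d) × (Fin h → ZMod d) //
          ∑ i, p.1 i + ∑ j, p.2 j = 0 ∧ ∀ i, addOrderOf (p.1 i) = m i} *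
        Nat.card {c : ZMod (2 * d) // addOrderOf c = 2 ∧ ¬ Even c.val} ^ h * d ^ (2 * g) := by
  have hcard : Nat.card {c : ZMod (2 * d) // addOrderOf c = 2 ∧ ¬ Even c.val} ^ h * d ^ (2 * g) =
      Nat.card ((Fin h → {c : ZMod (2 * d) // addOrderOf c = 2 ∧ ¬ Even c.val}) ×
        (Fin (2 * g) → ZMod d)) := by
    simp
  rw [Hplus, mul_assoc, hcard, ← Nat.card_prod]
  refine Nat.card_congr
    { toFun := fun t => (⟨(half ∘ t.1.1, half ∘ t.1.2.1), ?_, fun i => ?_⟩,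
        fun j => ⟨t.1.2.2.1 j, t.2.2.2.1 j⟩, half ∘ t.1.2.2.2)
      invFun := fun q => ⟨(twoMulHom d ∘ q.1.1.1, twoMulHom d ∘ q.1.1.2, fun j => q.2.1 j,
        twoMulHom d ∘ q.2.2), ?_, fun i => ?_, fun j => (q.2.1 j).2,
        fun _ => even_val_twoMulHom _, fun _ => even_val_twoMulHom _,
        fun _ => even_val_twoMulHom _⟩
      left_inv := fun t => ?_
      right_inv := fun q => ?_ }
  · apply twoMulHom_injective
    simp only [Function.comp_apply, map_add, map_sum, _root_.map_zero,
      twoMulHom_half (t.2.2.2.2.1 _), twoMulHom_half (t.2.2.2.2.2.1 _)]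
    exact t.2.1
  · simp only [Function.comp_apply]
    rw [← addOrderOf_twoMulHom, twoMulHom_half (t.2.2.2.2.1 i)]
    exact t.2.2.1 i
  · simp only [Function.comp_apply, ← map_sum, ← map_add, q.1.2.1, _root_.map_zero]
  · exact (addOrderOf_twoMulHom _).trans (q.1.2.2 i)
  · ext <;> simp [twoMulHom_half, t.2.2.2.2.1, t.2.2.2.2.2.1, t.2.2.2.2.2.2]
  · ext <;> simp [half_twoMulHom]

open ZMod in
lemma Hplus_two_mul {r h g : ℕ} {m : Fin r → ℕ} (hh : 1 ≤ h) {d : ℕ} (hd : 0 < d) :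
    Hplus r h g m (2 * d) =
      if Odd d ∧ ∀ i, m i ∣ d then d ^ (2 * g + h - 1) * ∏ i, Nat.totient (m i) else 0 := by
  have : NeZero d := ⟨hd.ne'⟩
  obtain ⟨n, rfl⟩ : ∃ n, h = n + 1 := ⟨h - 1, by omega⟩
  have hbranch : Nat.card {u : Fin r → ZMod d // ∀ i, addOrderOf (u i) = m i} =
      if ∀ i, m i ∣ d then ∏ i, Nat.totient (m i) else 0 := by
    rw [Nat.card_congr (Equiv.subtypePiEquivPi (β := fun _ : Fin r => ZMod d)
      (p := fun i x => addOrderOf x = m i)), Nat.card_pi]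
    simp only [card_addOrderOf_eq, Finset.prod_ite_zero, Finset.mem_univ, true_implies]
  rw [Hplus_two_mul_eq_card_mul, card_sum_add_sum_eq_zero (fun u => ∀ i, addOrderOf (u i) = m i),
    hbranch, card_odd_addOrderOf_eq_two, Nat.card_zmod]
  by_cases hodd : Odd d <;> by_cases hdvd : ∀ i, m i ∣ d <;> simp [hodd, hdvd]
  ring

lemma Nat.sum_divisors_filter_dvd {R : Type*} [AddCommMonoid R] {k n : ℕ} (hn : n ≠ 0)
    (hk : k ∣ n) (f : ℕ → R) :
    ∑ d ∈ n.divisors with k ∣ d, f d = ∑ e ∈ (n / k).divisors, f (k * e) := by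
  obtain ⟨c, rfl⟩ := hk
  have hk : 0 < k := Nat.pos_of_ne_zero (left_ne_zero_of_mul hn)
  rw [Nat.mul_div_cancel_left _ hk]
  refine Finset.sum_nbij' (· / k) (k * ·) ?_ ?_ ?_ ?_ ?_
  all_goals simp only [Finset.mem_filter, Nat.mem_divisors]
  · rintro _ ⟨⟨hdvd, -⟩, ⟨e, rfl⟩⟩
    rw [Nat.mul_div_cancel_left _ hk]
    exact ⟨(Nat.mul_dvd_mul_iff_left hk).mp hdvd, right_ne_zero_of_mul hn⟩
  · rintro e ⟨hdvd, -⟩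
    exact ⟨⟨Nat.mul_dvd_mul_left k hdvd, hn⟩, dvd_mul_right k e⟩
  · rintro _ ⟨-, ⟨e, rfl⟩⟩
    exact Nat.mul_div_cancel_left' (dvd_mul_right k e)
  · intro e _
    exact Nat.mul_div_cancel_left e hk
  · rintro _ ⟨-, ⟨e, rfl⟩⟩
    rw [Nat.mul_div_cancel_left _ hk]

lemma sum_divisors_filter_dvd_moebius_mul_pow {k n : ℕ} (hn : n ≠ 0) (hk : k ∣ n) (j : ℕ) :
    ∑ d ∈ n.divisors with k ∣ d, moebius (n / d) * (d : ℤ) ^ j =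
      (k : ℤ) ^ j * jordanTotient j (n / k) := by
  rw [Nat.sum_divisors_filter_dvd hn hk, jordanTotient, Finset.mul_sum]
  refine Finset.sum_congr rfl fun e _ => ?_
  rw [Nat.div_div_eq_div_mul]
  push_cast
  ring

theorem stmt_15_general (l : ℕ) (hlodd : Odd l) (h g r : ℕ) (hh : 1 ≤ h)
    (m : Fin r → ℕ) :
    (∀ d : ℕ, 0 < d →
      Hplus r h g m (2 * d) =
        if Odd d ∧ ∀ i, m i ∣ d then d ^ (2 * g + h - 1) * ∏ i, Nat.totient (m i)
        else 0) ∧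
    (∑ d ∈ l.divisors.filter (fun d => Odd (l / d)),
        moebius (l / d) * (Hplus r h g m (2 * d) : ℤ)) =
      (if Finset.univ.lcm m ∣ l then
        ((Finset.univ.lcm m : ℕ) : ℤ) ^ (2 * g + h - 1) *
          jordanTotient (2 * g + h - 1) (l / Finset.univ.lcm m) *
          ∏ i, (Nat.totient (m i) : ℤ)
      else 0) := by
  refine ⟨fun d hd => Hplus_two_mul hh hd, ?_⟩
  set M := Finset.univ.lcm m
  have hodd : ∀ d ∈ l.divisors, Odd d ∧ Odd (l / d) := fun d hd =>
    ⟨hlodd.of_dvd_nat (Nat.dvd_of_mem_divisors hd),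
      hlodd.of_dvd_nat (Nat.div_dvd_of_dvd (Nat.dvd_of_mem_divisors hd))⟩
  have hterm : ∀ d ∈ l.divisors, moebius (l / d) * (Hplus r h g m (2 * d) : ℤ) =
      if M ∣ d then
        moebius (l / d) * (d : ℤ) ^ (2 * g + h - 1) * ∏ i, (Nat.totient (m i) : ℤ)
      else 0 := fun d hd => by
    simp only [Hplus_two_mul hh (Nat.pos_of_mem_divisors hd), M, Finset.lcm_dvd_iff, (hodd d hd).1,
      true_and, Finset.mem_univ, true_implies]
    split_ifs <;> push_cast <;> ring
  rw [Finset.filter_true_of_mem fun d hd => (hodd d hd).2, Finset.sum_congr rfl hterm,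
    ← Finset.sum_filter]
  split_ifs with hMl
  · rw [← Finset.sum_mul, sum_divisors_filter_dvd_moebius_mul_pow hlodd.pos.ne' hMl]
  · refine Finset.sum_eq_zero fun d hd => absurd ?_ hMl
    rw [Finset.mem_filter] at hd
    exact hd.2.trans (Nat.dvd_of_mem_divisors hd.1)

/-- For odd `l`, `h ≥ 1` and branch indices `m i > 1` with `M = lcm (m i)`:
`Hplus r h g m (2d) = d^(2g+h-1) ∏ φ(m i)` if `d` is odd and all `m i ∣ d`, and `0`
otherwise; consequently `∑_{d ∣ l, l/d odd} μ(l/d) · Hplus r h g m (2d) =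
M^(2g+h-1) J_(2g+h-1)(l/M) ∏ φ(m i)` when `M ∣ l`, and `0` when `M ∤ l`. -/
theorem stmt_15 (l : ℕ) (hl : 0 < l) (hlodd : Odd l) (h g r : ℕ) (hh : 1 ≤ h)
    (m : Fin r → ℕ) (hm : ∀ i, 1 < m i) :
    (∀ d : ℕ, 0 < d →
      Hplus r h g m (2 * d) =
        if Odd d ∧ ∀ i, m i ∣ d then d ^ (2 * g + h - 1) * ∏ i, Nat.totient (m i)
        else 0) ∧
    (∑ d ∈ l.divisors.filter (fun d => Odd (l / d)),
        moebius (l / d) * (Hplus r h g m (2 * d) : ℤ)) =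
      (if Finset.univ.lcm m ∣ l then
        ((Finset.univ.lcm m : ℕ) : ℤ) ^ (2 * g + h - 1) *
          jordanTotient (2 * g + h - 1) (l / Finset.univ.lcm m) *
          ∏ i, (Nat.totient (m i) : ℤ)
      else 0) :=
  stmt_15_general l hlodd h g r hh m
end
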